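/- arXiv:2604.12022 — 2 statements merged into one kernel-verified Lean document; each statement's English description precedes it below -/
import Mathlib

section
/- Let H be an RKHS on ℝ^d with bounded measurable kernel k satisfying 0 ≤ k(u,v) ≤ K, and let p, q, m be Borel probability measures on ℝ^d. Define convMMD(p,q,m) = sup over f in the unit ball of H of |E_{p*m}[f] − E_{q*m}[f]|. If the kernel k is characteristic and the characteristic function of m vanishes only on a Lebesgue-null set, then convMMD(p,q,m) = 0 if and only if p = q. -/
open MeasureTheory ProbabilityTheory Complex Filter
open scoped InnerProductSpace ENNReal NNReal Topology

noncomputable def charFunE {d : ℕ} (μ : Measure (EuclideanSpace ℝ (Fin d)))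
    (t : EuclideanSpace ℝ (Fin d)) : ℂ :=
  ∫ x, Complex.exp ((⟪t, x⟫_ℝ : ℂ) * Complex.I) ∂μ

noncomputable def mconv {d : ℕ} (p m : Measure (EuclideanSpace ℝ (Fin d))) :
    Measure (EuclideanSpace ℝ (Fin d)) :=
  (p.prod m).map (fun z => z.1 + z.2)

section Aux
variable {d : ℕ}

lemma continuous_cfe_integrand (t : EuclideanSpace ℝ (Fin d)) :
    Continuous fun x : EuclideanSpace ℝ (Fin d) => Complex.exp ((⟪t, x⟫_ℝ : ℂ) * Complex.I) :=
  Complex.continuous_exp.comp ((Complex.continuous_ofReal.comp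
    (continuous_const.inner continuous_id)).mul continuous_const)

instance mconv_prob (p m : Measure (EuclideanSpace ℝ (Fin d)))
    [IsProbabilityMeasure p] [IsProbabilityMeasure m] : IsProbabilityMeasure (mconv p m) :=
  Measure.isProbabilityMeasure_map (by fun_prop : Measurable fun z :
      (EuclideanSpace ℝ (Fin d)) × (EuclideanSpace ℝ (Fin d)) => z.1 + z.2).aemeasurable

lemma charFunE_mconv (p m : Measure (EuclideanSpace ℝ (Fin d)))
    [IsProbabilityMeasure p] [IsProbabilityMeasure m] (t : EuclideanSpace ℝ (Fin d)) :
    charFunE (mconv p m) t = charFunE p t * charFunE m t := by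
  simp only [charFunE, mconv]
  rw [integral_map (by fun_prop) ((continuous_cfe_integrand t).aestronglyMeasurable)]
  have : ∀ z : (EuclideanSpace ℝ (Fin d)) × (EuclideanSpace ℝ (Fin d)),
      Complex.exp ((⟪t, z.1 + z.2⟫_ℝ : ℂ) * Complex.I)
        = Complex.exp ((⟪t, z.1⟫_ℝ : ℂ) * Complex.I) * Complex.exp ((⟪t, z.2⟫_ℝ : ℂ) * Complex.I) := by
    intro z
    rw [← Complex.exp_add, inner_add_right]
    push_cast
    ring_nf
  simp_rw [this]
  exact integral_prod_mul (fun x => Complex.exp ((⟪t, x⟫_ℝ : ℂ) * Complex.I))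
    (fun y => Complex.exp ((⟪t, y⟫_ℝ : ℂ) * Complex.I))

lemma integrable_rexp_gauss (c : ℝ) (hc : 0 < c) :
    Integrable (fun v : EuclideanSpace ℝ (Fin d) => Real.exp (-c * ‖v‖^2)) volume := by
  have h := (GaussianFourier.integrable_cexp_neg_mul_sq_norm_add (b := (c : ℂ))
    (by simpa using hc) 0 (0 : EuclideanSpace ℝ (Fin d))).norm
  refine h.congr (ae_of_all _ fun v => ?_)
  show ‖Complex.exp (-(c:ℂ) * ‖v‖^2 + 0 * (⟪(0 : EuclideanSpace ℝ (Fin d)), v⟫_ℝ : ℂ))‖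
      = Real.exp (-c * ‖v‖^2)
  rw [show -(c:ℂ) * ‖v‖^2 + 0 * (⟪(0 : EuclideanSpace ℝ (Fin d)), v⟫_ℝ : ℂ)
      = ((-c * ‖v‖^2 : ℝ) : ℂ) by push_cast; ring]
  rw [Complex.norm_exp_ofReal]

lemma integrable_rexp_gauss_shift (c : ℝ) (hc : 0 < c) (x : EuclideanSpace ℝ (Fin d)) :
    Integrable (fun v : EuclideanSpace ℝ (Fin d) => Real.exp (-c * ‖x - v‖^2)) volume :=
  (integrable_rexp_gauss c hc).comp_sub_left x

lemma key_k (c : ℝ) (hc : 0 < c) (μ : Measure (EuclideanSpace ℝ (Fin d)))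
    [IsProbabilityMeasure μ] (v : EuclideanSpace ℝ (Fin d)) :
    ((Real.pi : ℂ) / (((4*c)⁻¹ : ℝ) : ℂ)) ^ ((d : ℂ) / 2)
        * ((∫ x, Real.exp (-c * ‖x - v‖^2) ∂μ : ℝ) : ℂ)
      = ∫ t : EuclideanSpace ℝ (Fin d),
          Complex.exp (-(((4*c)⁻¹ : ℝ) : ℂ) * ‖t‖^2 - (⟪v, t⟫_ℝ : ℂ) * Complex.I)
            * charFunE μ t := by
  set b : ℂ := (((4*c)⁻¹ : ℝ) : ℂ) with hbdef
  have hb : 0 < b.re := by simp [hbdef]; positivity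
  have hc0 : (c : ℂ) ≠ 0 := by exact_mod_cast hc.ne'
  set A : ℂ := ((Real.pi : ℂ) / b) ^ ((d : ℂ) / 2) with hAdef
  have step1 : ∀ w : EuclideanSpace ℝ (Fin d),
      A * ((Real.exp (-c * ‖w‖^2) : ℝ) : ℂ)
        = ∫ t : EuclideanSpace ℝ (Fin d), Complex.exp (-b * ‖t‖^2 + Complex.I * ⟪w, t⟫_ℝ) := by
    intro w
    rw [GaussianFourier.integral_cexp_neg_mul_sq_norm_add hb Complex.I w]
    rw [finrank_euclideanSpace_fin]
    congr 1
    rw [Complex.ofReal_exp]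
    congr 1
    rw [Complex.I_sq, hbdef]
    push_cast
    field_simp
  have hcont : Continuous fun z : (EuclideanSpace ℝ (Fin d)) × (EuclideanSpace ℝ (Fin d)) =>
      Complex.exp (-b * ‖z.2‖^2 + Complex.I * ⟪z.1 - v, z.2⟫_ℝ) := by
    apply Complex.continuous_exp.comp
    apply Continuous.add
    · exact continuous_const.mul ((Complex.continuous_ofReal.comp
        (continuous_norm.comp continuous_snd)).pow 2)
    · exact continuous_const.mul (Complex.continuous_ofReal.comp
        ((continuous_fst.sub continuous_const).inner continuous_snd))
  have hint : Integrable (Function.uncurry fun x t : EuclideanSpace ℝ (Fin d) =>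
      Complex.exp (-b * ‖t‖^2 + Complex.I * ⟪x - v, t⟫_ℝ)) (μ.prod volume) := by
    refine (integrable_prod_iff hcont.aestronglyMeasurable).2 ⟨?_, ?_⟩
    · exact ae_of_all _ fun x =>
        GaussianFourier.integrable_cexp_neg_mul_sq_norm_add hb Complex.I (x - v)
    · have hnorm : (fun x : EuclideanSpace ℝ (Fin d) =>
          ∫ t : EuclideanSpace ℝ (Fin d),
            ‖Complex.exp (-b * ‖t‖^2 + Complex.I * ⟪x - v, t⟫_ℝ)‖ ∂volume)
          = fun _ => ∫ t : EuclideanSpace ℝ (Fin d), Real.exp (-(4*c)⁻¹ * ‖t‖^2) ∂volume := by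
        funext x
        congr 1
        funext t
        rw [show -b * (‖t‖ : ℂ)^2 + Complex.I * (⟪x - v, t⟫_ℝ : ℂ)
            = ((-(4*c)⁻¹ * ‖t‖^2 : ℝ) : ℂ) + (⟪x - v, t⟫_ℝ : ℂ) * Complex.I by
          rw [hbdef]; push_cast; ring]
        rw [Complex.exp_add, norm_mul,
          Complex.norm_exp_ofReal, Complex.norm_exp_ofReal_mul_I, mul_one]
      rw [hnorm]
      exact integrable_const _
  calc A * ((∫ x, Real.exp (-c * ‖x - v‖^2) ∂μ : ℝ) : ℂ)
      = A * (∫ x, ((Real.exp (-c * ‖x - v‖^2) : ℝ) : ℂ) ∂μ) := by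
        congr 1
        exact integral_ofReal.symm
    _ = ∫ x, A * ((Real.exp (-c * ‖x - v‖^2) : ℝ) : ℂ) ∂μ := (integral_const_mul _ _).symm
    _ = ∫ x, ∫ t : EuclideanSpace ℝ (Fin d),
          Complex.exp (-b * ‖t‖^2 + Complex.I * ⟪x - v, t⟫_ℝ) ∂volume ∂μ := by
        exact integral_congr_ae (ae_of_all _ fun x => step1 (x - v))
    _ = ∫ t : EuclideanSpace ℝ (Fin d), ∫ x,
          Complex.exp (-b * ‖t‖^2 + Complex.I * ⟪x - v, t⟫_ℝ) ∂μ ∂volume :=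
        integral_integral_swap hint
    _ = ∫ t : EuclideanSpace ℝ (Fin d),
          Complex.exp (-b * ‖t‖^2 - (⟪v, t⟫_ℝ : ℂ) * Complex.I) * charFunE μ t := by
        congr 1
        funext t
        have hsplit : ∀ x : EuclideanSpace ℝ (Fin d),
            Complex.exp (-b * ‖t‖^2 + Complex.I * ⟪x - v, t⟫_ℝ)
              = Complex.exp (-b * ‖t‖^2 - (⟪v, t⟫_ℝ : ℂ) * Complex.I)
                * Complex.exp ((⟪t, x⟫_ℝ : ℂ) * Complex.I) := by
          intro x
          rw [← Complex.exp_add]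
          congr 1
          rw [inner_sub_left, real_inner_comm x t]
          push_cast
          ring
        simp_rw [hsplit]
        rw [integral_const_mul]
        rfl

lemma k_eq {μ ν : Measure (EuclideanSpace ℝ (Fin d))}
    [IsProbabilityMeasure μ] [IsProbabilityMeasure ν]
    (h : charFunE μ =ᵐ[volume] charFunE ν) (c : ℝ) (hc : 0 < c)
    (v : EuclideanSpace ℝ (Fin d)) :
    ∫ x, Real.exp (-c * ‖x - v‖^2) ∂μ = ∫ x, Real.exp (-c * ‖x - v‖^2) ∂ν := by
  have h3 : (∫ t : EuclideanSpace ℝ (Fin d),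
      Complex.exp (-(((4*c)⁻¹ : ℝ) : ℂ) * ‖t‖^2 - (⟪v, t⟫_ℝ : ℂ) * Complex.I) * charFunE μ t)
      = ∫ t : EuclideanSpace ℝ (Fin d),
      Complex.exp (-(((4*c)⁻¹ : ℝ) : ℂ) * ‖t‖^2 - (⟪v, t⟫_ℝ : ℂ) * Complex.I) * charFunE ν t :=
    integral_congr_ae (h.mono fun t ht => by dsimp only; rw [ht])
  have hA : ((Real.pi : ℂ) / (((4*c)⁻¹ : ℝ) : ℂ)) ^ ((d : ℂ) / 2) ≠ 0 := by
    have hbase : (Real.pi : ℂ) / (((4*c)⁻¹ : ℝ) : ℂ) ≠ 0 :=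
      div_ne_zero (by exact_mod_cast Real.pi_ne_zero)
        (by simp only [ne_eq, Complex.ofReal_eq_zero]; positivity)
    rw [Ne, Complex.cpow_eq_zero_iff]
    exact fun hx => hbase hx.1
  have := (key_k c hc μ v).trans (h3.trans (key_k c hc ν v).symm)
  exact_mod_cast mul_left_cancel₀ hA this

lemma T_integrable (μ : Measure (EuclideanSpace ℝ (Fin d))) [IsProbabilityMeasure μ]
    (c : ℝ) (hc : 0 < c) (g : EuclideanSpace ℝ (Fin d) → ℝ) (hgc : Continuous g)
    (M : ℝ) (hM : ∀ x, |g x| ≤ M) :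
    Integrable (fun z : (EuclideanSpace ℝ (Fin d)) × (EuclideanSpace ℝ (Fin d)) =>
      g z.2 * Real.exp (-c * ‖z.1 - z.2‖^2)) (μ.prod volume) := by
  have hcont : Continuous fun z : (EuclideanSpace ℝ (Fin d)) × (EuclideanSpace ℝ (Fin d)) =>
      g z.2 * Real.exp (-c * ‖z.1 - z.2‖^2) :=
    (hgc.comp continuous_snd).mul (Real.continuous_exp.comp
      (continuous_const.mul (((continuous_fst.sub continuous_snd).norm).pow 2)))
  refine (integrable_prod_iff hcont.aestronglyMeasurable).2 ⟨?_, ?_⟩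
  · refine ae_of_all _ fun x => ?_
    refine ((integrable_rexp_gauss_shift c hc x).const_mul M).mono'
      ((hgc.mul (Real.continuous_exp.comp
        (continuous_const.mul (((continuous_const.sub continuous_id).norm).pow 2)))).aestronglyMeasurable)
      (ae_of_all _ fun v => ?_)
    dsimp only
    rw [Real.norm_eq_abs, abs_mul, _root_.abs_of_pos (Real.exp_pos _)]
    exact mul_le_mul_of_nonneg_right (hM v) (Real.exp_pos _).le
  · have hub : ∀ x : EuclideanSpace ℝ (Fin d),
        ∫ v, ‖g v * Real.exp (-c * ‖x - v‖^2)‖ ∂volume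
          ≤ M * ∫ v : EuclideanSpace ℝ (Fin d), Real.exp (-c * ‖v‖^2) ∂volume := by
      intro x
      have hMnn : 0 ≤ M := le_trans (abs_nonneg _) (hM 0)
      calc ∫ v, ‖g v * Real.exp (-c * ‖x - v‖^2)‖ ∂volume
          ≤ ∫ v, M * Real.exp (-c * ‖x - v‖^2) ∂volume := by
            refine integral_mono_of_nonneg (ae_of_all _ fun v => norm_nonneg _)
              ((integrable_rexp_gauss_shift c hc x).const_mul M) (ae_of_all _ fun v => ?_)
            dsimp only
            rw [Real.norm_eq_abs, abs_mul, _root_.abs_of_pos (Real.exp_pos _)]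
            exact mul_le_mul_of_nonneg_right (hM v) (Real.exp_pos _).le
        _ = M * ∫ v, Real.exp (-c * ‖x - v‖^2) ∂volume := integral_const_mul M _
        _ = M * ∫ v : EuclideanSpace ℝ (Fin d), Real.exp (-c * ‖v‖^2) ∂volume := by
            rw [integral_sub_left_eq_self
              (fun v : EuclideanSpace ℝ (Fin d) => Real.exp (-c * ‖v‖^2)) volume x]
    refine (integrable_const (M * ∫ v : EuclideanSpace ℝ (Fin d),
        Real.exp (-c * ‖v‖^2) ∂volume)).mono'
      (hcont.aestronglyMeasurable.norm.integral_prod_right') (ae_of_all _ fun x => ?_)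
    dsimp only
    rw [Real.norm_eq_abs, _root_.abs_of_nonneg (integral_nonneg fun v => norm_nonneg _)]
    exact hub x

lemma T_eq {μ ν : Measure (EuclideanSpace ℝ (Fin d))}
    [IsProbabilityMeasure μ] [IsProbabilityMeasure ν]
    (h : charFunE μ =ᵐ[volume] charFunE ν) (c : ℝ) (hc : 0 < c)
    (g : EuclideanSpace ℝ (Fin d) → ℝ) (hgc : Continuous g) (M : ℝ) (hM : ∀ x, |g x| ≤ M) :
    ∫ z : (EuclideanSpace ℝ (Fin d)) × (EuclideanSpace ℝ (Fin d)),
        g z.2 * Real.exp (-c * ‖z.1 - z.2‖^2) ∂(μ.prod volume)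
      = ∫ z : (EuclideanSpace ℝ (Fin d)) × (EuclideanSpace ℝ (Fin d)),
        g z.2 * Real.exp (-c * ‖z.1 - z.2‖^2) ∂(ν.prod volume) := by
  rw [integral_prod_symm _ (T_integrable μ c hc g hgc M hM),
    integral_prod_symm _ (T_integrable ν c hc g hgc M hM)]
  congr 1
  funext v
  dsimp only
  rw [integral_const_mul, integral_const_mul, k_eq h c hc v]

lemma CoV (g : EuclideanSpace ℝ (Fin d) → ℝ) (n : ℕ) (hn : 1 ≤ n)
    (x : EuclideanSpace ℝ (Fin d)) :
    (n:ℝ)^d * ∫ v, g v * Real.exp (-((n:ℝ)^2) * ‖x - v‖^2) ∂volume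
      = ∫ w, g (x - (n:ℝ)⁻¹ • w) * Real.exp (-‖w‖^2) ∂volume := by
  have hn0 : (0:ℝ) < n := by exact_mod_cast hn
  have h1 : ∫ v, g v * Real.exp (-((n:ℝ)^2) * ‖x - v‖^2) ∂volume
      = ∫ u, g (x - u) * Real.exp (-((n:ℝ)^2) * ‖u‖^2) ∂volume := by
    rw [← integral_sub_left_eq_self
      (fun v => g v * Real.exp (-((n:ℝ)^2) * ‖x - v‖^2)) volume x]
    congr 1
    funext u
    rw [sub_sub_cancel]
  rw [h1]
  have h2 := MeasureTheory.Measure.integral_comp_inv_smul_of_nonneg (volume : Measure (EuclideanSpace ℝ (Fin d)))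
      (fun u => g (x - u) * Real.exp (-((n:ℝ)^2) * ‖u‖^2)) hn0.le
  rw [finrank_euclideanSpace_fin, smul_eq_mul] at h2
  rw [← h2]
  congr 1
  funext w
  have : ((n:ℝ)^2) * ‖(n:ℝ)⁻¹ • w‖^2 = ‖w‖^2 := by
    rw [norm_smul, Real.norm_eq_abs, _root_.abs_of_pos (inv_pos.2 hn0), mul_pow]
    field_simp
  rw [neg_mul, this]

lemma L_tendsto (g : EuclideanSpace ℝ (Fin d) → ℝ) (hgc : Continuous g) (M : ℝ)
    (hM : ∀ x, |g x| ≤ M) (x : EuclideanSpace ℝ (Fin d)) :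
    Tendsto (fun n : ℕ => ∫ w : EuclideanSpace ℝ (Fin d),
        g (x - (n:ℝ)⁻¹ • w) * Real.exp (-‖w‖^2) ∂volume) atTop
      (𝓝 (g x * ∫ w : EuclideanSpace ℝ (Fin d), Real.exp (-‖w‖^2) ∂volume)) := by
  have hgauss : Integrable (fun w : EuclideanSpace ℝ (Fin d) => Real.exp (-‖w‖^2)) volume := by
    refine (integrable_rexp_gauss 1 one_pos).congr (ae_of_all _ fun w => ?_)
    dsimp only
    rw [neg_one_mul]
  have := tendsto_integral_of_dominated_convergence (μ := (volume : Measure (EuclideanSpace ℝ (Fin d))))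
    (F := fun (n : ℕ) w => g (x - (n:ℝ)⁻¹ • w) * Real.exp (-‖w‖^2))
    (f := fun w => g x * Real.exp (-‖w‖^2))
    (bound := fun w => M * Real.exp (-‖w‖^2))
    (fun n => (show Continuous (fun w : EuclideanSpace ℝ (Fin d) =>
        g (x - (n:ℝ)⁻¹ • w) * Real.exp (-‖w‖^2)) by fun_prop).aestronglyMeasurable)
    (hgauss.const_mul M)
    (fun n => ae_of_all _ fun w => by
      rw [Real.norm_eq_abs, abs_mul, _root_.abs_of_pos (Real.exp_pos _)]
      exact mul_le_mul_of_nonneg_right (hM _) (Real.exp_pos _).le)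
    (ae_of_all _ fun w => by
      refine Tendsto.mul ?_ tendsto_const_nhds
      have h0 : Tendsto (fun n : ℕ => x - (n:ℝ)⁻¹ • w) atTop (𝓝 x) := by
        have h1 : Tendsto (fun n : ℕ => ((n:ℝ))⁻¹ • w) atTop (𝓝 ((0:ℝ) • w)) :=
          (tendsto_inv_atTop_nhds_zero_nat).smul_const w
        rw [zero_smul] at h1
        simpa using tendsto_const_nhds.sub h1
      exact (hgc.tendsto x).comp h0)
  rwa [integral_const_mul] at this


theorem ext_of_charFunE_ae {μ ν : Measure (EuclideanSpace ℝ (Fin d))}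
    [IsProbabilityMeasure μ] [IsProbabilityMeasure ν]
    (h : charFunE μ =ᵐ[volume] charFunE ν) : μ = ν := by
  refine ext_of_forall_lintegral_eq_of_IsFiniteMeasure fun f => ?_
  set g : EuclideanSpace ℝ (Fin d) → ℝ := fun x => (f x : ℝ) with hgdef
  have hgc : Continuous g := NNReal.continuous_coe.comp f.continuous
  set M : ℝ := ((nndist 0 f : ℝ≥0) : ℝ) with hMdef
  have hM : ∀ x, |g x| ≤ M := by
    intro x
    have h0 : |g x| = ((f x : ℝ≥0) : ℝ) := _root_.abs_of_nonneg (f x).2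
    rw [h0, hMdef]
    exact_mod_cast f.apply_le_nndist_zero x
  set P : ℝ := ∫ w : EuclideanSpace ℝ (Fin d), Real.exp (-‖w‖^2) ∂volume with hPdef
  have hPval : P = Real.pi ^ ((d : ℝ) / 2) := by
    rw [hPdef, show (fun w : EuclideanSpace ℝ (Fin d) => Real.exp (-‖w‖^2))
        = fun w : EuclideanSpace ℝ (Fin d) => Real.exp (-1 * ‖w‖^2) by
      funext w; rw [neg_one_mul]]
    rw [GaussianFourier.integral_rexp_neg_mul_sq_norm one_pos, finrank_euclideanSpace_fin]
    norm_num
  have hP : P ≠ 0 := by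
    rw [hPval]
    positivity
  have main : ∀ (ρ : Measure (EuclideanSpace ℝ (Fin d))), IsProbabilityMeasure ρ →
      Tendsto (fun n : ℕ => (n:ℝ)^d * ∫ z : (EuclideanSpace ℝ (Fin d)) × (EuclideanSpace ℝ (Fin d)),
          g z.2 * Real.exp (-((n:ℝ)^2) * ‖z.1 - z.2‖^2) ∂(ρ.prod volume)) atTop
        (𝓝 (P * ∫ x, g x ∂ρ)) := by
    intro ρ hρ
    haveI := hρ
    have heq : ∀ᶠ n : ℕ in atTop,
        (fun n : ℕ => ∫ x, (∫ w : EuclideanSpace ℝ (Fin d),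
            g (x - (n:ℝ)⁻¹ • w) * Real.exp (-‖w‖^2) ∂volume) ∂ρ) n
          = (fun n : ℕ => (n:ℝ)^d * ∫ z : (EuclideanSpace ℝ (Fin d)) × (EuclideanSpace ℝ (Fin d)),
              g z.2 * Real.exp (-((n:ℝ)^2) * ‖z.1 - z.2‖^2) ∂(ρ.prod volume)) n := by
      filter_upwards [eventually_ge_atTop 1] with n hn
      have hn2 : (0:ℝ) < (n:ℝ)^2 := by positivity
      rw [integral_prod _ (T_integrable ρ ((n:ℝ)^2) hn2 g hgc M hM)]
      rw [← integral_const_mul]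
      congr 1
      funext x
      dsimp only
      exact (CoV g n hn x).symm
    refine Tendsto.congr' heq ?_
    have hlim : Tendsto (fun n : ℕ => ∫ x, (∫ w : EuclideanSpace ℝ (Fin d),
        g (x - (n:ℝ)⁻¹ • w) * Real.exp (-‖w‖^2) ∂volume) ∂ρ) atTop
        (𝓝 (∫ x, g x * P ∂ρ)) := by
      refine tendsto_integral_of_dominated_convergence (bound := fun _ => M * P)
        (fun n => ?_) (integrable_const _) (fun n => ae_of_all _ fun x => ?_)
        (ae_of_all _ fun x => ?_)
      · have hcontn : Continuous fun z : (EuclideanSpace ℝ (Fin d)) × (EuclideanSpace ℝ (Fin d)) =>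
            g (z.1 - (n:ℝ)⁻¹ • z.2) * Real.exp (-‖z.2‖^2) :=
          (hgc.comp (continuous_fst.sub (continuous_snd.const_smul ((n:ℝ)⁻¹)))).mul
            (Real.continuous_exp.comp ((continuous_norm.comp continuous_snd).pow 2).neg)
        exact (hcontn.aestronglyMeasurable (μ := ρ.prod volume)).integral_prod_right'
      · have h1 : |∫ w : EuclideanSpace ℝ (Fin d),
            g (x - (n:ℝ)⁻¹ • w) * Real.exp (-‖w‖^2) ∂volume|
            ≤ ∫ w : EuclideanSpace ℝ (Fin d), M * Real.exp (-‖w‖^2) ∂volume := by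
          rw [← Real.norm_eq_abs]
          refine norm_integral_le_of_norm_le ?_ (ae_of_all _ fun w => ?_)
          · refine Integrable.const_mul ?_ _
            refine (integrable_rexp_gauss 1 one_pos).congr (ae_of_all _ fun w => ?_)
            dsimp only
            rw [neg_one_mul]
          · rw [Real.norm_eq_abs, abs_mul, _root_.abs_of_pos (Real.exp_pos _)]
            exact mul_le_mul_of_nonneg_right (hM _) (Real.exp_pos _).le
        rw [Real.norm_eq_abs]
        refine h1.trans ?_
        rw [integral_const_mul]
      · exact L_tendsto g hgc M hM x
    have : ∫ x, g x * P ∂ρ = P * ∫ x, g x ∂ρ := by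
      rw [← integral_const_mul]
      congr 1
      funext x
      ring
    rwa [this] at hlim
  have hseq : ∀ᶠ n : ℕ in atTop,
      (fun n : ℕ => (n:ℝ)^d * ∫ z : (EuclideanSpace ℝ (Fin d)) × (EuclideanSpace ℝ (Fin d)),
          g z.2 * Real.exp (-((n:ℝ)^2) * ‖z.1 - z.2‖^2) ∂(μ.prod volume)) n
        = (fun n : ℕ => (n:ℝ)^d * ∫ z : (EuclideanSpace ℝ (Fin d)) × (EuclideanSpace ℝ (Fin d)),
          g z.2 * Real.exp (-((n:ℝ)^2) * ‖z.1 - z.2‖^2) ∂(ν.prod volume)) n := by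
    filter_upwards [eventually_ge_atTop 1] with n hn
    have hn2 : (0:ℝ) < (n:ℝ)^2 := by positivity
    rw [T_eq h ((n:ℝ)^2) hn2 g hgc M hM]
  have hkey : P * ∫ x, g x ∂μ = P * ∫ x, g x ∂ν :=
    tendsto_nhds_unique ((main μ inferInstance).congr' hseq) (main ν inferInstance)
  have key : ∫ x, g x ∂μ = ∫ x, g x ∂ν := mul_left_cancel₀ hP hkey
  have h1 := BoundedContinuousFunction.toReal_lintegral_coe_eq_integral f μ
  have h2 := BoundedContinuousFunction.toReal_lintegral_coe_eq_integral f ν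
  have h3 : (∫⁻ x, f x ∂μ).toReal = (∫⁻ x, f x ∂ν).toReal := by
    rw [h1, h2]
    exact key
  exact (ENNReal.toReal_eq_toReal_iff'
    (BoundedContinuousFunction.lintegral_lt_top_of_nnreal μ f).ne
    (BoundedContinuousFunction.lintegral_lt_top_of_nnreal ν f).ne).1 h3

lemma degenerate_case {H : Type*} [NormedAddCommGroup H] [InnerProductSpace ℝ H]
    [CompleteSpace H] {Φ : EuclideanSpace ℝ (Fin d) → H}
    {μ₁ μ₂ : Measure (EuclideanSpace ℝ (Fin d))}
    [IsProbabilityMeasure μ₁] [IsProbabilityMeasure μ₂]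
    (hchar : ∀ ν₁ ν₂ : Measure (EuclideanSpace ℝ (Fin d)),
      IsProbabilityMeasure ν₁ → IsProbabilityMeasure ν₂ →
      (∫ x, Φ x ∂ν₁) = (∫ x, Φ x ∂ν₂) → ν₁ = ν₂)
    (h1 : ¬ AEStronglyMeasurable Φ μ₁) : μ₁ = μ₂ := by
  set ν : Measure (EuclideanSpace ℝ (Fin d)) := (2:ℝ≥0∞)⁻¹ • (μ₁ + μ₂) with hν
  haveI hνp : IsProbabilityMeasure ν := by
    constructor
    rw [hν, Measure.smul_apply, Measure.add_apply, measure_univ, measure_univ, smul_eq_mul]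
    rw [one_add_one_eq_two, ENNReal.inv_mul_cancel two_ne_zero ENNReal.ofNat_ne_top]
  have hν2 : ¬ AEStronglyMeasurable Φ ν := by
    intro hsm
    apply h1
    have h2 : AEStronglyMeasurable Φ ((2:ℝ≥0∞) • ν) := hsm.smul_measure _
    have h3 : (2:ℝ≥0∞) • ν = μ₁ + μ₂ := by
      rw [hν, smul_smul, ENNReal.mul_inv_cancel two_ne_zero ENNReal.ofNat_ne_top, one_smul]
    rw [h3] at h2
    exact h2.mono_measure (Measure.le_add_right le_rfl)
  have e1 : ∫ x, Φ x ∂μ₁ = 0 := integral_undef (fun hint => h1 hint.1)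
  have e2 : ∫ x, Φ x ∂ν = 0 := integral_undef (fun hint => hν2 hint.1)
  have hμν : μ₁ = ν := hchar _ _ inferInstance inferInstance (by rw [e1, e2])
  ext s hs
  have h2 : μ₁ s = 2⁻¹ * (μ₁ s + μ₂ s) := by
    conv_lhs => rw [hμν]
    rw [hν, Measure.smul_apply, Measure.add_apply, smul_eq_mul]
  have h3 : 2 * μ₁ s = μ₁ s + μ₂ s := by
    conv_lhs => rw [h2]
    rw [← mul_assoc, ENNReal.mul_inv_cancel two_ne_zero ENNReal.ofNat_ne_top, one_mul]
  rw [two_mul] at h3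
  exact (ENNReal.add_right_inj (measure_ne_top μ₁ s)).1 h3

end Aux

/-- For an RKHS (presented by its feature map Φ : ℝ^d → H, so that f(x) = ⟪f, Φ x⟫ and
k(u,v) = ⟪Φ u, Φ v⟫) with bounded measurable characteristic kernel, and noise m whose
characteristic function vanishes only on a Lebesgue-null set,
convMMD(p,q,m) = sup_{‖f‖ ≤ 1} |E_{p*m} f − E_{q*m} f| is zero iff p = q. -/
theorem convMMD_eq_zero_iff {d : ℕ} (H : Type*) [NormedAddCommGroup H]
    [InnerProductSpace ℝ H] [CompleteSpace H] [MeasurableSpace H] [BorelSpace H]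
    (Φ : EuclideanSpace ℝ (Fin d) → H) (hΦ : Measurable Φ) (K : ℝ)
    (hbd : ∀ u v, 0 ≤ ⟪Φ u, Φ v⟫_ℝ ∧ ⟪Φ u, Φ v⟫_ℝ ≤ K)
    (hchar : ∀ ν₁ ν₂ : Measure (EuclideanSpace ℝ (Fin d)),
      IsProbabilityMeasure ν₁ → IsProbabilityMeasure ν₂ →
      (∫ x, Φ x ∂ν₁) = (∫ x, Φ x ∂ν₂) → ν₁ = ν₂)
    (p q m : Measure (EuclideanSpace ℝ (Fin d)))
    [IsProbabilityMeasure p] [IsProbabilityMeasure q] [IsProbabilityMeasure m]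
    (hm : volume {t : EuclideanSpace ℝ (Fin d) | charFunE m t = 0} = 0) :
    (⨆ f : {f : H // ‖f‖ ≤ 1},
        |(∫ x, ⟪(f : H), Φ x⟫_ℝ ∂(mconv p m)) - (∫ x, ⟪(f : H), Φ x⟫_ℝ ∂(mconv q m))|) = 0
      ↔ p = q := by
  haveI : Nonempty {f : H // ‖f‖ ≤ 1} := ⟨⟨0, by simp⟩⟩
  constructor
  · intro h
    have hK0 : 0 ≤ K := le_trans (hbd 0 0).1 (hbd 0 0).2
    have hΦn : ∀ x, ‖Φ x‖ ≤ Real.sqrt K := by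
      intro x
      have h1 : ‖Φ x‖^2 ≤ K := by
        rw [← real_inner_self_eq_norm_sq]
        exact (hbd x x).2
      calc ‖Φ x‖ = Real.sqrt (‖Φ x‖^2) := (Real.sqrt_sq (norm_nonneg _)).symm
        _ ≤ Real.sqrt K := Real.sqrt_le_sqrt h1
    have hinner_bd : ∀ (f : H) (x : EuclideanSpace ℝ (Fin d)),
        ‖⟪f, Φ x⟫_ℝ‖ ≤ ‖f‖ * Real.sqrt K := by
      intro f x
      rw [Real.norm_eq_abs]
      exact (abs_real_inner_le_norm f (Φ x)).trans
        (mul_le_mul_of_nonneg_left (hΦn x) (norm_nonneg f))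
    have habs : ∀ (f : H), ‖f‖ ≤ 1 → ∀ (ρ : Measure (EuclideanSpace ℝ (Fin d))),
        IsProbabilityMeasure ρ → |∫ x, ⟪f, Φ x⟫_ℝ ∂ρ| ≤ Real.sqrt K := by
      intro f hf ρ hρ
      haveI := hρ
      rw [← Real.norm_eq_abs]
      have h2 := norm_integral_le_of_norm_le_const (μ := ρ) (C := Real.sqrt K)
        (ae_of_all _ fun x => (hinner_bd f x).trans
          (by nlinarith [Real.sqrt_nonneg K]))
      simpa using h2
    have hterm : ∀ f : {f : H // ‖f‖ ≤ 1},
        |(∫ x, ⟪(f : H), Φ x⟫_ℝ ∂(mconv p m)) - (∫ x, ⟪(f : H), Φ x⟫_ℝ ∂(mconv q m))| = 0 := by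
      intro f
      refine le_antisymm ?_ (abs_nonneg _)
      rw [← h]
      refine le_ciSup (f := fun f : {f : H // ‖f‖ ≤ 1} =>
        |(∫ x, ⟪(f : H), Φ x⟫_ℝ ∂(mconv p m)) - (∫ x, ⟪(f : H), Φ x⟫_ℝ ∂(mconv q m))|) ?_ f
      refine ⟨2 * Real.sqrt K, ?_⟩
      rintro r ⟨g, rfl⟩
      dsimp only
      rw [sub_eq_add_neg]
      refine (abs_add_le _ _).trans ?_
      rw [abs_neg, two_mul]
      exact add_le_add (habs g g.2 _ inferInstance) (habs g g.2 _ inferInstance)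
    have hkey : ∀ f : H, ∫ x, ⟪f, Φ x⟫_ℝ ∂(mconv p m) = ∫ x, ⟪f, Φ x⟫_ℝ ∂(mconv q m) := by
      intro f
      rcases eq_or_ne f 0 with rfl | hf0
      · simp
      · have hu : ‖(‖f‖⁻¹ • f : H)‖ ≤ 1 := by
          rw [norm_smul, norm_inv, norm_norm, inv_mul_cancel₀ (norm_ne_zero_iff.2 hf0)]
        have h2 := hterm ⟨‖f‖⁻¹ • f, hu⟩
        rw [abs_eq_zero, sub_eq_zero] at h2
        dsimp only at h2
        simp_rw [real_inner_smul_left] at h2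
        rw [integral_const_mul, integral_const_mul] at h2
        exact mul_left_cancel₀ (inv_ne_zero (norm_ne_zero_iff.2 hf0)) h2
    have hconv : mconv p m = mconv q m := by
      by_cases hsm : AEStronglyMeasurable Φ (mconv p m) ∧ AEStronglyMeasurable Φ (mconv q m)
      · have hi1 : Integrable Φ (mconv p m) :=
          ⟨hsm.1, HasFiniteIntegral.of_bounded (ae_of_all _ hΦn)⟩
        have hi2 : Integrable Φ (mconv q m) :=
          ⟨hsm.2, HasFiniteIntegral.of_bounded (ae_of_all _ hΦn)⟩
        refine hchar _ _ inferInstance inferInstance ?_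
        have hdiff : ∀ f : H,
            ⟪f, (∫ x, Φ x ∂(mconv p m)) - (∫ x, Φ x ∂(mconv q m))⟫_ℝ = 0 := by
          intro f
          rw [inner_sub_right, ← integral_inner hi1 f, ← integral_inner hi2 f, hkey f, sub_self]
        have h3 := hdiff ((∫ x, Φ x ∂(mconv p m)) - (∫ x, Φ x ∂(mconv q m)))
        rw [inner_self_eq_zero, sub_eq_zero] at h3
        exact h3
      · rcases not_and_or.1 hsm with h1 | h1
        · exact degenerate_case hchar h1
        · exact (degenerate_case hchar h1).symm
    have hmne : ∀ᵐ t ∂(volume : Measure (EuclideanSpace ℝ (Fin d))), charFunE m t ≠ 0 := by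
      rw [ae_iff]
      simpa [not_not] using hm
    have hae : charFunE p =ᵐ[volume] charFunE q := by
      filter_upwards [hmne] with t ht
      have h1 : charFunE p t * charFunE m t = charFunE q t * charFunE m t := by
        rw [← charFunE_mconv p m t, ← charFunE_mconv q m t, hconv]
      exact mul_right_cancel₀ ht h1
    exact ext_of_charFunE_ae hae
  · rintro rfl
    simp only [sub_self, abs_zero]
    exact ciSup_const
end

section
/- Let Δ = h(Z̃, Z̃') − h(Z, Z') where h(z,z') = k(x,x') + k(y,y') − k(x,y') − k(y,x'), the kernel k(x,y) = κ₀(x−y) is translation invariant with κ₀ Lipschitz constant L_k, and the noisy points are obtained by adding noise U with E‖U − U'‖² = 2ᾱ (noise pairs i.i.d., mean zero, second moment ᾱ per coordinate pair). Then E[Δ²] ≤ 32 L_k² ᾱ. -/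
open MeasureTheory ProbabilityTheory
open scoped ENNReal NNReal

lemma lip_diff_bound {d : ℕ} (κ₀ : EuclideanSpace ℝ (Fin d) → ℝ) (Lk : ℝ≥0)
    (hL : LipschitzWith Lk κ₀) (a b u v : EuclideanSpace ℝ (Fin d)) :
    |κ₀ ((a + u) - (b + v)) - κ₀ (a - b)| ≤ Lk * ‖u - v‖ := by
  have h := hL.dist_le_mul ((a + u) - (b + v)) (a - b)
  rw [Real.dist_eq, dist_eq_norm] at h
  have : (a + u) - (b + v) - (a - b) = u - v := by abel
  rwa [this] at h

/-- Bound on the second moment of the noise-induced perturbation Δ of the MMD U-statistic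
kernel: if κ₀ is L_k-Lipschitz and each relevant noise difference has second moment 2ᾱ,
then E[Δ²] ≤ 32 L_k² ᾱ. -/
theorem ustat_noise_perturbation_bound {d : ℕ} {Ω : Type*} [MeasurableSpace Ω]
    (μ : Measure Ω) [IsProbabilityMeasure μ]
    (κ₀ : EuclideanSpace ℝ (Fin d) → ℝ) (Lk : ℝ≥0) (hL : LipschitzWith Lk κ₀)
    (X Y X' Y' UX UY UX' UY' : Ω → EuclideanSpace ℝ (Fin d))
    (hX : Measurable X) (hY : Measurable Y) (hX' : Measurable X') (hY' : Measurable Y')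
    (hUX : Measurable UX) (hUY : Measurable UY)
    (hUX' : Measurable UX') (hUY' : Measurable UY')
    (αbar : ℝ)
    (hm1 : MemLp (fun ω => UX ω - UX' ω) 2 μ)
    (hm2 : MemLp (fun ω => UY ω - UY' ω) 2 μ)
    (hm3 : MemLp (fun ω => UX ω - UY' ω) 2 μ)
    (hm4 : MemLp (fun ω => UY ω - UX' ω) 2 μ)
    (hα1 : (∫ ω, ‖UX ω - UX' ω‖ ^ 2 ∂μ) = 2 * αbar)
    (hα2 : (∫ ω, ‖UY ω - UY' ω‖ ^ 2 ∂μ) = 2 * αbar)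
    (hα3 : (∫ ω, ‖UX ω - UY' ω‖ ^ 2 ∂μ) = 2 * αbar)
    (hα4 : (∫ ω, ‖UY ω - UX' ω‖ ^ 2 ∂μ) = 2 * αbar)
    (Δ : Ω → ℝ)
    (hΔ : ∀ ω, Δ ω =
      (κ₀ ((X ω + UX ω) - (X' ω + UX' ω)) + κ₀ ((Y ω + UY ω) - (Y' ω + UY' ω))
        - κ₀ ((X ω + UX ω) - (Y' ω + UY' ω)) - κ₀ ((Y ω + UY ω) - (X' ω + UX' ω)))
      - (κ₀ (X ω - X' ω) + κ₀ (Y ω - Y' ω) - κ₀ (X ω - Y' ω) - κ₀ (Y ω - X' ω))) :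
    (∫ ω, (Δ ω) ^ 2 ∂μ) ≤ 32 * Lk ^ 2 * αbar := by
  have hi1 : Integrable (fun ω => ‖UX ω - UX' ω‖ ^ 2) μ := hm1.norm.integrable_sq
  have hi2 : Integrable (fun ω => ‖UY ω - UY' ω‖ ^ 2) μ := hm2.norm.integrable_sq
  have hi3 : Integrable (fun ω => ‖UX ω - UY' ω‖ ^ 2) μ := hm3.norm.integrable_sq
  have hi4 : Integrable (fun ω => ‖UY ω - UX' ω‖ ^ 2) μ := hm4.norm.integrable_sq
  have j12 : Integrable (fun ω => ‖UX ω - UX' ω‖ ^ 2 + ‖UY ω - UY' ω‖ ^ 2) μ := hi1.add hi2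
  have j123 : Integrable (fun ω =>
      ‖UX ω - UX' ω‖ ^ 2 + ‖UY ω - UY' ω‖ ^ 2 + ‖UX ω - UY' ω‖ ^ 2) μ := j12.add hi3
  have j1234 : Integrable (fun ω =>
      ‖UX ω - UX' ω‖ ^ 2 + ‖UY ω - UY' ω‖ ^ 2 + ‖UX ω - UY' ω‖ ^ 2 + ‖UY ω - UX' ω‖ ^ 2) μ :=
    j123.add hi4
  have hgint : Integrable (fun ω => 4 * (Lk : ℝ) ^ 2 *
      (‖UX ω - UX' ω‖ ^ 2 + ‖UY ω - UY' ω‖ ^ 2 + ‖UX ω - UY' ω‖ ^ 2 + ‖UY ω - UX' ω‖ ^ 2)) μ :=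
    j1234.const_mul _
  have hle : ∀ ω, Δ ω ^ 2 ≤ 4 * (Lk : ℝ) ^ 2 *
      (‖UX ω - UX' ω‖ ^ 2 + ‖UY ω - UY' ω‖ ^ 2 + ‖UX ω - UY' ω‖ ^ 2 + ‖UY ω - UX' ω‖ ^ 2) := by
    intro ω
    have h1 := lip_diff_bound κ₀ Lk hL (X ω) (X' ω) (UX ω) (UX' ω)
    have h2 := lip_diff_bound κ₀ Lk hL (Y ω) (Y' ω) (UY ω) (UY' ω)
    have h3 := lip_diff_bound κ₀ Lk hL (X ω) (Y' ω) (UX ω) (UY' ω)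
    have h4 := lip_diff_bound κ₀ Lk hL (Y ω) (X' ω) (UY ω) (UX' ω)
    set A1 := κ₀ ((X ω + UX ω) - (X' ω + UX' ω)) - κ₀ (X ω - X' ω) with hA1
    set A2 := κ₀ ((Y ω + UY ω) - (Y' ω + UY' ω)) - κ₀ (Y ω - Y' ω) with hA2
    set A3 := κ₀ ((X ω + UX ω) - (Y' ω + UY' ω)) - κ₀ (X ω - Y' ω) with hA3
    set A4 := κ₀ ((Y ω + UY ω) - (X' ω + UX' ω)) - κ₀ (Y ω - X' ω) with hA4
    have hd : Δ ω = A1 + A2 - A3 - A4 := by rw [hΔ ω, hA1, hA2, hA3, hA4]; ring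
    set S := ‖UX ω - UX' ω‖ + ‖UY ω - UY' ω‖ + ‖UX ω - UY' ω‖ + ‖UY ω - UX' ω‖ with hS
    have habs : |Δ ω| ≤ (Lk : ℝ) * S := by
      have e1 := abs_sub (A1 + A2 - A3) A4
      have e2 := abs_sub (A1 + A2) A3
      have e3 := abs_add_le A1 A2
      rw [hd]
      rw [hS]
      have : (Lk : ℝ) * (‖UX ω - UX' ω‖ + ‖UY ω - UY' ω‖ + ‖UX ω - UY' ω‖ + ‖UY ω - UX' ω‖)
          = Lk * ‖UX ω - UX' ω‖ + Lk * ‖UY ω - UY' ω‖ + Lk * ‖UX ω - UY' ω‖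
            + Lk * ‖UY ω - UX' ω‖ := by ring
      rw [this]
      linarith
    have hS0 : 0 ≤ S := by
      rw [hS]; positivity
    have hsq : Δ ω ^ 2 ≤ ((Lk : ℝ) * S) ^ 2 := by
      calc Δ ω ^ 2 = |Δ ω| ^ 2 := (sq_abs _).symm
        _ ≤ ((Lk : ℝ) * S) ^ 2 := by
            apply pow_le_pow_left₀ (abs_nonneg _) habs
    have hCS : S ^ 2 ≤ 4 * (‖UX ω - UX' ω‖ ^ 2 + ‖UY ω - UY' ω‖ ^ 2 + ‖UX ω - UY' ω‖ ^ 2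
        + ‖UY ω - UX' ω‖ ^ 2) := by
      rw [hS]
      nlinarith [sq_nonneg (‖UX ω - UX' ω‖ - ‖UY ω - UY' ω‖),
        sq_nonneg (‖UX ω - UX' ω‖ - ‖UX ω - UY' ω‖),
        sq_nonneg (‖UX ω - UX' ω‖ - ‖UY ω - UX' ω‖),
        sq_nonneg (‖UY ω - UY' ω‖ - ‖UX ω - UY' ω‖),
        sq_nonneg (‖UY ω - UY' ω‖ - ‖UY ω - UX' ω‖),
        sq_nonneg (‖UX ω - UY' ω‖ - ‖UY ω - UX' ω‖)]
    calc Δ ω ^ 2 ≤ ((Lk : ℝ) * S) ^ 2 := hsq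
      _ = (Lk : ℝ) ^ 2 * S ^ 2 := by ring
      _ ≤ (Lk : ℝ) ^ 2 * (4 * (‖UX ω - UX' ω‖ ^ 2 + ‖UY ω - UY' ω‖ ^ 2 + ‖UX ω - UY' ω‖ ^ 2
            + ‖UY ω - UX' ω‖ ^ 2)) := by
          exact mul_le_mul_of_nonneg_left hCS (sq_nonneg _)
      _ = _ := by ring
  have hmain : (∫ ω, (Δ ω) ^ 2 ∂μ) ≤ ∫ ω, 4 * (Lk : ℝ) ^ 2 *
      (‖UX ω - UX' ω‖ ^ 2 + ‖UY ω - UY' ω‖ ^ 2 + ‖UX ω - UY' ω‖ ^ 2 + ‖UY ω - UX' ω‖ ^ 2) ∂μ :=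
    integral_mono_of_nonneg (Filter.Eventually.of_forall fun ω => sq_nonneg _)
      hgint (Filter.Eventually.of_forall hle)
  have hgval : (∫ ω, 4 * (Lk : ℝ) ^ 2 *
      (‖UX ω - UX' ω‖ ^ 2 + ‖UY ω - UY' ω‖ ^ 2 + ‖UX ω - UY' ω‖ ^ 2 + ‖UY ω - UX' ω‖ ^ 2) ∂μ)
      = 32 * (Lk : ℝ) ^ 2 * αbar := by
    rw [integral_const_mul, integral_add j123 hi4, integral_add j12 hi3, integral_add hi1 hi2,
      hα1, hα2, hα3, hα4]
    ring
  calc (∫ ω, (Δ ω) ^ 2 ∂μ) ≤ _ := hmain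
    _ = 32 * (Lk : ℝ) ^ 2 * αbar := hgval
    _ ≤ 32 * Lk ^ 2 * αbar := le_of_eq (by push_cast; ring)
end
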